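/- Let L : Θ → ℝ be nonnegative with finite positive supremum M, Θ_A ⊆ Θ, r_A = sup L(Θ_A)/sup L(Θ_Aᶜ), and k* = sup{k > 1 : S_k ⊆ Θ_A} (set k* = 1 if no such k exists), where S_k = {θ : L(θ) > M/k}. Then r_A > 1 if and only if k* > 1, and in that case r_A = k*. -/

import Mathlib

/-! With `B = sup L(Θ_Aᶜ)`, the set `S_k` lies in `Θ_A` exactly when `B ≤ M / k`, so the admissible
`k > 1` form the interval `(1, M / B]` and `k* = max 1 (M / B)`. Since `M = max (sup L(Θ_A)) B`,
this is `max 1 r_A`, and both claims follow at once. -/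

open Set

section

variable {α : Type*} {f : α → ℝ} {s : Set α}

theorem nonempty_of_csSup_image_pos (h : 0 < sSup (f '' s)) : s.Nonempty := by
  by_contra hs
  rw [not_nonempty_iff_eq_empty.mp hs, image_empty, Real.sSup_empty] at h
  exact h.false

theorem setOf_lt_subset_iff_csSup_image_compl_le (hbdd : BddAbove (f '' sᶜ))
    (hne : sᶜ.Nonempty) (c : ℝ) : {x | c < f x} ⊆ s ↔ sSup (f '' sᶜ) ≤ c := by
  rw [csSup_le_iff hbdd (hne.image f), forall_mem_image]
  exact forall_congr' fun x => by rw [mem_compl_iff, ← not_lt, not_imp_not]; rfl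

theorem setOf_superlevel_subset_eq_Ioc (hbdd : BddAbove (f '' sᶜ))
    (hpos : 0 < sSup (f '' sᶜ)) (M : ℝ) :
    {k : ℝ | 1 < k ∧ {x | M / k < f x} ⊆ s} = Ioc 1 (M / sSup (f '' sᶜ)) := by
  ext k
  simp only [mem_ofPred_eq, mem_Ioc, and_congr_right_iff]
  intro hk
  rw [setOf_lt_subset_iff_csSup_image_compl_le hbdd (nonempty_of_csSup_image_pos hpos),
    le_div_iff₀ (zero_lt_one.trans hk), le_div_iff₀ hpos, mul_comm]

theorem csSup_image_univ_eq_max (hf : BddAbove (range f)) (hpos : 0 < sSup (f '' sᶜ)) :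
    sSup (f '' univ) = max (sSup (f '' s)) (sSup (f '' sᶜ)) := by
  rw [← union_compl_self s, image_union]
  rcases s.eq_empty_or_nonempty with rfl | hs
  · rw [image_empty, empty_union, Real.sSup_empty, max_eq_right hpos.le]
  · exact csSup_union (hf.mono (image_subset_range f s)) (hs.image f)
      (hf.mono (image_subset_range f sᶜ)) ((nonempty_of_csSup_image_pos hpos).image f)

end

theorem csSup_insert_Ioc {β : Type*} [ConditionallyCompleteLinearOrder β] (a b : β) :
    sSup (insert a (Ioc a b)) = max a b := by
  rcases le_total a b with hab | hba
  · rw [Ioc_insert_left hab, csSup_Icc hab, max_eq_right hab]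
  · rw [Ioc_eq_empty_of_le hba, insert_empty_eq, csSup_singleton, max_eq_left hba]

theorem stmt11_general {Θ : Type*} (L : Θ → ℝ)
    (hbdd : BddAbove (Set.range L))
    (M : ℝ) (hM : M = sSup (L '' (Set.univ : Set Θ)))
    (ΘA : Set Θ) (hAc : 0 < sSup (L '' ΘAᶜ))
    (rA : ℝ) (hrA : rA = sSup (L '' ΘA) / sSup (L '' ΘAᶜ))
    (kstar : ℝ)
    (hkstar : kstar = sSup (insert 1 {k : ℝ | 1 < k ∧ {θ | L θ > M / k} ⊆ ΘA})) :
    (rA > 1 ↔ kstar > 1) ∧ (rA > 1 → rA = kstar) := by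
  have hbddAc : BddAbove (L '' ΘAᶜ) := hbdd.mono (image_subset_range L _)
  have hkstar_eq : kstar = max 1 rA := by
    rw [hkstar, setOf_superlevel_subset_eq_Ioc hbddAc hAc, csSup_insert_Ioc, hM,
      csSup_image_univ_eq_max hbdd hAc, ← max_div_div_right hAc.le, div_self hAc.ne', ← hrA,
      max_comm rA 1, ← max_assoc, max_self]
  subst hkstar_eq
  exact ⟨(lt_max_iff.trans (or_iff_right (lt_irrefl 1))).symm,
    fun h => (max_eq_right h.le).symm⟩

theorem stmt11 {Θ : Type*} (L : Θ → ℝ) (hnonneg : ∀ θ, 0 ≤ L θ)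
    (hbdd : BddAbove (Set.range L))
    (M : ℝ) (hM : M = sSup (L '' (Set.univ : Set Θ))) (hMpos : 0 < M)
    (ΘA : Set Θ) (hAc : 0 < sSup (L '' ΘAᶜ))
    (rA : ℝ) (hrA : rA = sSup (L '' ΘA) / sSup (L '' ΘAᶜ))
    (kstar : ℝ)
    (hkstar : kstar = sSup (insert 1 {k : ℝ | 1 < k ∧ {θ | L θ > M / k} ⊆ ΘA})) :
    (rA > 1 ↔ kstar > 1) ∧ (rA > 1 → rA = kstar) :=
  stmt11_general L hbdd M hM ΘA hAc rA hrA kstar hkstar
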